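/- Let G be a finite group, σ ∈ Aut(G), M a σ-invariant normal subgroup, ψ : G → H a homomorphism with kernel M, g, h ∈ G, and suppose the solution set of the SDLP in Im(ψ) for ψ(g), ψ(h) is {t₀ + n₀·t : t ∈ ℕ} where n₀ is the size of the orbit of 1 under ρ̄_{(ψ(g),1)}. Then g' = ρ_{(g,1)^{n₀}}(1_G) ∈ M and h' = ρ_{(g,1)^{-t₀}}(h) ∈ M, and the solutions of the SDLP in G for g, h are exactly the numbers t₀ + n₀·t where t solves the SDLP in M for g', h' with automorphism σ^{n₀} restricted to M. -/

import Mathlib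

/-- Multiplication in the semidirect product `G ⋊_σ ℕ`:
`(g,s)(g',s') = (g·σ^s(g'), s+s')`. -/
def sdMulA {G : Type*} [Group G] (σ : MulAut G) (x y : G × ℕ) : G × ℕ :=
  (x.1 * (σ ^ x.2) y.1, x.2 + y.2)

/-- The `t`-th power in the semidirect product `G ⋊_σ ℕ`. -/
def sdPowA {G : Type*} [Group G] (σ : MulAut G) (x : G × ℕ) : ℕ → G × ℕ
  | 0 => (1, 0)
  | t + 1 => sdMulA σ x (sdPowA σ x t)

/-- The transformation `ρ_{(g,s)} : G → G`, `x ↦ g·σ^s(x)`. -/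
def rhoA {G : Type*} [Group G] (σ : MulAut G) (x : G × ℕ) : G → G :=
  fun z => x.1 * (σ ^ x.2) z

section Aux
variable {G H : Type*} [Group G] [Group H]

lemma aux_rho_pow_one (σ : MulAut G) (g : G) (t : ℕ) :
    rhoA σ (sdPowA σ (g,1) t) 1 = (sdPowA σ (g,1) t).1 := by
  simp [rhoA]

lemma aux_fst_succ (σ : MulAut G) (g : G) (t : ℕ) :
    (sdPowA σ (g,1) (t+1)).1 = g * σ ((sdPowA σ (g,1) t).1) := by
  simp [sdPowA, sdMulA]

lemma aux_fst_add (σ : MulAut G) (g : G) (a b : ℕ) :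
    (sdPowA σ (g,1) (a+b)).1
      = (sdPowA σ (g,1) a).1 * (σ^a) ((sdPowA σ (g,1) b).1) := by
  induction a with
  | zero => simp [sdPowA]
  | succ a ih =>
    have h1 : a + 1 + b = (a + b) + 1 := by omega
    rw [h1, aux_fst_succ, ih, aux_fst_succ, map_mul, mul_assoc]
    congr 1
    rw [pow_succ']
    rfl

lemma aux_ker_iff (σ : MulAut G) (ψ : G →* H)
    (hM : Subgroup.map σ.toMonoidHom ψ.ker = ψ.ker) (x : G) :
    σ x ∈ ψ.ker ↔ x ∈ ψ.ker := by
  constructor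
  · intro hx
    rw [← hM] at hx
    obtain ⟨y, hy, hyx⟩ := hx
    have : y = x := σ.injective hyx
    rwa [← this]
  · intro hx
    rw [← hM]
    exact ⟨x, hx, rfl⟩

lemma aux_ker_pow_iff (σ : MulAut G) (ψ : G →* H)
    (hM : Subgroup.map σ.toMonoidHom ψ.ker = ψ.ker) (k : ℕ) (x : G) :
    (σ^k) x ∈ ψ.ker ↔ x ∈ ψ.ker := by
  induction k with
  | zero => simp
  | succ k ih =>
    rw [pow_succ']
    have : (σ * σ^k) x = σ ((σ^k) x) := rfl
    rw [this, aux_ker_iff σ ψ hM, ih]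

lemma aux_ker_invpow_iff (σ : MulAut G) (ψ : G →* H)
    (hM : Subgroup.map σ.toMonoidHom ψ.ker = ψ.ker) (k : ℕ) (x : G) :
    (σ⁻¹^k) x ∈ ψ.ker ↔ x ∈ ψ.ker := by
  rw [← aux_ker_pow_iff σ ψ hM k ((σ⁻¹^k) x)]
  rw [inv_pow]
  have : (σ^k) ((σ^k)⁻¹ x) = x := by
    exact (σ^k).apply_symm_apply x
  rw [this]

lemma aux_compat_pow (σ : MulAut G) (ψ : G →* H) (σbar : MulAut ↥ψ.range)
    (hcompat : ∀ x : G,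
      (σbar ⟨ψ x, MonoidHom.mem_range.mpr ⟨x, rfl⟩⟩ : H) = ψ (σ x))
    (k : ℕ) (x : G) :
    ((σbar^k) ⟨ψ x, MonoidHom.mem_range.mpr ⟨x, rfl⟩⟩ : H) = ψ ((σ^k) x) := by
  induction k with
  | zero => simp
  | succ k ih =>
    rw [pow_succ']
    have h1 : (σbar * σbar^k) ⟨ψ x, MonoidHom.mem_range.mpr ⟨x, rfl⟩⟩
        = σbar ((σbar^k) ⟨ψ x, MonoidHom.mem_range.mpr ⟨x, rfl⟩⟩) := rfl
    have h2 : ((σbar^k) ⟨ψ x, MonoidHom.mem_range.mpr ⟨x, rfl⟩⟩)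
        = (⟨ψ ((σ^k) x), MonoidHom.mem_range.mpr ⟨(σ^k) x, rfl⟩⟩ : ψ.range) :=
      Subtype.ext ih
    rw [h1, h2, hcompat]
    rw [pow_succ']
    rfl

lemma aux_bar_fst (σ : MulAut G) (ψ : G →* H) (σbar : MulAut ↥ψ.range)
    (hcompat : ∀ x : G,
      (σbar ⟨ψ x, MonoidHom.mem_range.mpr ⟨x, rfl⟩⟩ : H) = ψ (σ x))
    (g : G) (t : ℕ) :
    ((sdPowA σbar (⟨ψ g, MonoidHom.mem_range.mpr ⟨g, rfl⟩⟩, 1) t).1 : H)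
      = ψ ((sdPowA σ (g,1) t).1) := by
  induction t with
  | zero => simp [sdPowA]
  | succ t ih =>
    have h1 : (sdPowA σbar (⟨ψ g, MonoidHom.mem_range.mpr ⟨g, rfl⟩⟩, 1) (t+1)).1
        = ⟨ψ g, MonoidHom.mem_range.mpr ⟨g, rfl⟩⟩
          * σbar ((sdPowA σbar (⟨ψ g, MonoidHom.mem_range.mpr ⟨g, rfl⟩⟩, 1) t).1) := by
      simp [sdPowA, sdMulA]
    have h2 : (sdPowA σbar (⟨ψ g, MonoidHom.mem_range.mpr ⟨g, rfl⟩⟩, 1) t).1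
        = (⟨ψ ((sdPowA σ (g,1) t).1),
            MonoidHom.mem_range.mpr ⟨(sdPowA σ (g,1) t).1, rfl⟩⟩ : ψ.range) :=
      Subtype.ext ih
    rw [h1, h2]
    push_cast
    rw [hcompat]
    simp [sdPowA, sdMulA]
end Aux

/-- recursion of the SDLP into the quotient `Im(ψ) ≅ G/M` and the
subgroup `M = ker ψ`. If the solution set downstairs is `{t₀ + n₀·t : t ∈ ℕ}` with
`n₀` the orbit size of `1` under `ρ̄_{(ψ(g),1)}`, then `g' = ρ_{(g,1)^{n₀}}(1_G) ∈ M`,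
`h' = ρ_{(g,1)^{-t₀}}(h) ∈ M`, and the solutions upstairs are exactly the numbers
`t₀ + n₀·t` where `t` solves the SDLP in `M` for `g', h'` with automorphism `σ^{n₀}`. -/
theorem sdlp_recursion {G H : Type*} [Group G] [Finite G] [Group H] [Finite H]
    (σ : MulAut G) (ψ : G →* H)
    (hM : Subgroup.map σ.toMonoidHom ψ.ker = ψ.ker)
    (σbar : MulAut ↥ψ.range)
    (hcompat : ∀ x : G,
      (σbar ⟨ψ x, MonoidHom.mem_range.mpr ⟨x, rfl⟩⟩ : H) = ψ (σ x))
    (g h : G) (t₀ n₀ : ℕ) (hn₀pos : 0 < n₀)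
    (hn₀ : n₀ = Set.ncard (Set.range fun t : ℕ =>
      rhoA σbar (sdPowA σbar (⟨ψ g, MonoidHom.mem_range.mpr ⟨g, rfl⟩⟩, 1) t) 1))
    (hsol : {t : ℕ | (⟨ψ h, MonoidHom.mem_range.mpr ⟨h, rfl⟩⟩ : ψ.range)
        = rhoA σbar (sdPowA σbar (⟨ψ g, MonoidHom.mem_range.mpr ⟨g, rfl⟩⟩, 1) t) 1}
      = {n : ℕ | ∃ t : ℕ, n = t₀ + n₀ * t}) :
    rhoA σ (sdPowA σ (g, 1) n₀) 1 ∈ ψ.ker ∧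
    (σ⁻¹ ^ t₀) ((sdPowA σ (g, 1) t₀).1⁻¹ * h) ∈ ψ.ker ∧
    {t : ℕ | h = rhoA σ (sdPowA σ (g, 1) t) 1}
      = {n : ℕ | ∃ t : ℕ, n = t₀ + n₀ * t ∧
          (σ⁻¹ ^ t₀) ((sdPowA σ (g, 1) t₀).1⁻¹ * h)
            = rhoA (σ ^ n₀) (sdPowA (σ ^ n₀) (rhoA σ (sdPowA σ (g, 1) n₀) 1, 1) t) 1} := by
  -- notation
  set P : ℕ → G := fun t => (sdPowA σ (g,1) t).1 with hP
  -- translate hsol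
  have hsol' : ∀ t : ℕ, ψ h = ψ (P t) ↔ ∃ s : ℕ, t = t₀ + n₀ * s := by
    intro t
    have := Set.ext_iff.mp hsol t
    simp only [Set.mem_setOf_eq] at this
    rw [← this, rhoA]
    constructor
    · intro hh
      apply Subtype.ext
      simp only []
      rw [hh]
      have := aux_bar_fst σ ψ σbar hcompat g t
      push_cast
      rw [← this]
      simp
    · intro hh
      have hc := congrArg (Subtype.val) hh
      simp only [Submonoid.coe_mul] at hc
      rw [hc]
      have := aux_bar_fst σ ψ σbar hcompat g t
      push_cast
      rw [this]
      simp
      rfl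
  -- t₀ is a solution downstairs
  have ht₀ : ψ h = ψ (P t₀) := (hsol' t₀).mpr ⟨0, by omega⟩
  have ht₁ : ψ h = ψ (P (t₀ + n₀)) := (hsol' (t₀ + n₀)).mpr ⟨1, by omega⟩
  -- σ^{t₀}(P n₀) ∈ ker
  have hker1 : (σ^t₀) (P n₀) ∈ ψ.ker := by
    have : ψ (P (t₀ + n₀)) = ψ (P t₀) * ψ ((σ^t₀) (P n₀)) := by
      rw [hP]
      simp only []
      rw [aux_fst_add σ g t₀ n₀, map_mul]
    rw [← ht₁, ht₀] at this
    exact (left_eq_mul.mp this)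
  have goal1 : P n₀ ∈ ψ.ker := (aux_ker_pow_iff σ ψ hM t₀ (P n₀)).mp hker1
  have goal2 : (σ⁻¹ ^ t₀) ((P t₀)⁻¹ * h) ∈ ψ.ker := by
    rw [aux_ker_invpow_iff σ ψ hM]
    rw [MonoidHom.mem_ker, map_mul, map_inv, ← ht₀, inv_mul_cancel]
  refine ⟨by rw [aux_rho_pow_one]; exact goal1, goal2, ?_⟩
  -- the product formula at stride n₀
  have hQ : ∀ s : ℕ, (sdPowA (σ ^ n₀) (P n₀, 1) s).1 = P (n₀ * s) := by
    intro s
    induction s with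
    | zero => simp [sdPowA, hP]
    | succ s ih =>
      rw [aux_fst_succ (σ ^ n₀) (P n₀) s, ih]
      have h1 : n₀ * (s + 1) = n₀ + n₀ * s := by ring
      rw [h1, hP]
      simp only []
      rw [aux_fst_add σ g n₀ (n₀ * s)]
  -- rewrite the inner rhoA's
  have hrw : ∀ s : ℕ,
      rhoA (σ ^ n₀) (sdPowA (σ ^ n₀) (rhoA σ (sdPowA σ (g, 1) n₀) 1, 1) s) 1
        = P (n₀ * s) := by
    intro s
    rw [aux_rho_pow_one σ g n₀, aux_rho_pow_one (σ ^ n₀) (P n₀) s, hQ]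
  have hcancel : ∀ y : G, (σ⁻¹ ^ t₀) ((σ ^ t₀) y) = y := by
    intro y
    rw [inv_pow]
    exact (σ ^ t₀).symm_apply_apply y
  have hcancel' : ∀ y : G, (σ ^ t₀) ((σ⁻¹ ^ t₀) y) = y := by
    intro y
    rw [inv_pow]
    exact (σ ^ t₀).apply_symm_apply y
  ext t
  simp only [Set.mem_setOf_eq]
  rw [aux_rho_pow_one σ g t]
  constructor
  · intro hh
    have : ∃ s, t = t₀ + n₀ * s := (hsol' t).mp (congrArg ψ hh)
    obtain ⟨s, hs⟩ := this
    refine ⟨s, hs, ?_⟩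
    rw [hrw s]
    have : h = P t₀ * (σ ^ t₀) (P (n₀ * s)) := by
      rw [hh, hs, hP]
      simp only []
      rw [aux_fst_add σ g t₀ (n₀ * s)]
    rw [this]
    show (σ⁻¹ ^ t₀) ((P t₀)⁻¹ * (P t₀ * (σ ^ t₀) (P (n₀ * s)))) = P (n₀ * s)
    rw [inv_mul_cancel_left]
    exact hcancel (P (n₀ * s))
  · rintro ⟨s, hs, hcond⟩
    rw [hrw s] at hcond
    have h2 : (P t₀)⁻¹ * h = (σ ^ t₀) (P (n₀ * s)) := by
      have := congrArg (σ ^ t₀) hcond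
      rwa [hcancel'] at this
    have h3 : h = P t₀ * (σ ^ t₀) (P (n₀ * s)) := by
      rw [← h2, mul_inv_cancel_left]
    rw [hs]
    show h = (sdPowA σ (g, 1) (t₀ + n₀ * s)).1
    rw [aux_fst_add σ g t₀ (n₀ * s)]
    exact h3
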